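/- Fix d ≥ 1 and for each edge e of ℤ^d let π(e) be a random path connecting the endpoints of e, with the stationarity property and the tail bound ℙ(|π(e)| > n) ≤ C(M) n^{-M} for every M ≥ 1 (uniformly in e). Define π^{-1}(b) := {e : b ∈ π(e)}. Then for every p ∈ [1, ∞), 𝔼[|π^{-1}(b)|^p] ≤ C(d, p) < ∞. -/

import Mathlib

open MeasureTheory
open scoped ENNReal

/-!
If `b ∈ π(e)` then `|π(e)| ≥ |e - b|`, so the tail bound gives
`ℙ(b ∈ π(e)) ≤ C (1 + |e - b|)^(-M)` for every `M`. Writing `N = ∑_e 1{b ∈ π(e)}`, Hölder's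
inequality with the summable weights `u_e = (1 + |e - b|)^(-(d+1))` gives
`N^q ≤ (∑_e u_e)^(q-1) ∑_e u_e^(1-q) 1{b ∈ π(e)}`; taking expectations with `M = (d+1) q`
bounds `𝔼[N^q]` by `C (∑_e u_e)^q < ∞`.
-/

theorem ENNReal.tsum_pow {α : Type*} (f : α → ℝ≥0∞) (n : ℕ) :
    (∑' a, f a) ^ n = ∑' x : Fin n → α, ∏ i, f (x i) := by
  induction n with
  | zero => simp
  | succ n ih =>
    rw [← (Fin.consEquiv fun _ => α).tsum_eq, ENNReal.tsum_prod', pow_succ', ih,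
      ← ENNReal.tsum_mul_right]
    refine tsum_congr fun a => ?_
    rw [← ENNReal.tsum_mul_left]
    simp [Fin.consEquiv, Fin.prod_univ_succ]

theorem tsum_ofReal_one_add_norm_int_rpow_neg_lt_top {t : ℝ} (ht : 1 < t) :
    ∑' n : ℤ, ENNReal.ofReal ((1 + ‖n‖) ^ (-t)) < ⊤ := by
  have hsumm : Summable fun n : ℤ => (1 + ‖n‖) ^ (-t) := by
    refine (Real.summable_abs_int_rpow ht).of_norm_bounded_eventually ?_
    filter_upwards [(Set.finite_singleton (0 : ℤ)).compl_mem_cofinite] with n hn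
    have hn : 0 < |(n : ℝ)| := by simpa using hn
    rw [Real.norm_of_nonneg (by positivity), Int.norm_eq_abs]
    exact Real.rpow_le_rpow_of_nonpos hn (by linarith) (by linarith)
  rw [← ENNReal.ofReal_tsum_of_nonneg (fun _ => by positivity) hsumm]
  exact ENNReal.ofReal_lt_top

theorem tsum_ofReal_one_add_norm_rpow_neg_lt_top {d : ℕ} {s : ℝ} (hs : d < s) :
    ∑' x : Fin d → ℤ, ENNReal.ofReal ((1 + ‖x‖) ^ (-s)) < ⊤ := by
  rcases Nat.eq_zero_or_pos d with rfl | hd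
  · simp
  have hd' : (0 : ℝ) < d := by exact_mod_cast hd
  set t := s / d
  have ht : 1 < t := (one_lt_div hd').2 hs
  -- each factor `1 + ‖x i‖` is at most `1 + ‖x‖`, so `(1 + ‖x‖)^(-s) = ((1 + ‖x‖)^d)^(-t)` is
  -- dominated by a product of one-dimensional weights
  have hprod : ∀ x : Fin d → ℤ, (1 + ‖x‖) ^ (-s) ≤ ∏ i, (1 + ‖x i‖) ^ (-t) := by
    intro x
    have hle : ∏ i, (1 + ‖x i‖) ≤ (1 + ‖x‖) ^ d :=
      (Finset.prod_le_prod (fun _ _ => by positivity)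
        fun i _ => by grw [norm_le_pi_norm x i]).trans_eq
        (by rw [Finset.prod_const, Finset.card_univ, Fintype.card_fin])
    rw [Real.finsetProd_rpow _ _ (fun _ _ => by positivity)]
    calc (1 + ‖x‖) ^ (-s) = ((1 + ‖x‖) ^ d) ^ (-t) := by
          rw [← Real.rpow_natCast, ← Real.rpow_mul (by positivity), mul_neg,
            mul_div_cancel₀ s hd'.ne']
      _ ≤ (∏ i, (1 + ‖x i‖)) ^ (-t) :=
          Real.rpow_le_rpow_of_nonpos (by positivity) hle (by linarith)
  calc ∑' x : Fin d → ℤ, ENNReal.ofReal ((1 + ‖x‖) ^ (-s))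
      ≤ ∑' x : Fin d → ℤ, ∏ i, ENNReal.ofReal ((1 + ‖x i‖) ^ (-t)) := by
        refine ENNReal.tsum_le_tsum fun x => ?_
        rw [← ENNReal.ofReal_prod_of_nonneg fun _ _ => by positivity]
        exact ENNReal.ofReal_le_ofReal (hprod x)
    _ = (∑' n : ℤ, ENNReal.ofReal ((1 + ‖n‖) ^ (-t))) ^ d :=
        (ENNReal.tsum_pow (fun n : ℤ => ENNReal.ofReal ((1 + ‖n‖) ^ (-t))) d).symm
    _ < ⊤ := ENNReal.pow_lt_top (tsum_ofReal_one_add_norm_int_rpow_neg_lt_top ht)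

theorem tsum_ofReal_one_add_norm_sub_rpow_neg_lt_top {d : ℕ} {s : ℝ} (hs : d < s)
    (a : Fin d → ℤ) (ι : Type*) [Fintype ι] :
    ∑' e : (Fin d → ℤ) × ι, ENNReal.ofReal ((1 + ‖e.1 - a‖) ^ (-s)) < ⊤ := by
  rw [ENNReal.tsum_prod']
  simp only [tsum_fintype, Finset.sum_const, Finset.card_univ, nsmul_eq_mul]
  have htranslate := (Equiv.subRight a).tsum_eq fun x => ENNReal.ofReal ((1 + ‖x‖) ^ (-s))
  simp only [Equiv.subRight_apply] at htranslate
  rw [ENNReal.tsum_mul_left, htranslate]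
  exact ENNReal.mul_lt_top (ENNReal.natCast_lt_top _) (tsum_ofReal_one_add_norm_rpow_neg_lt_top hs)

theorem measure_ge_le_of_nat_tail {Ω : Type*} [MeasurableSpace Ω] {μ : Measure Ω}
    [IsProbabilityMeasure μ] {X : Ω → ℝ} {M C : ℝ} (hM : 0 ≤ M)
    (h : ∀ n : ℕ, 1 ≤ n → μ {ω | (n : ℝ) < X ω} ≤ ENNReal.ofReal (C * (n : ℝ) ^ (-M)))
    {t : ℝ} (ht : 0 ≤ t) :
    μ {ω | t ≤ X ω} ≤ ENNReal.ofReal (max C 1 * 3 ^ M * (1 + t) ^ (-M)) := by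
  have h3 : 3 ^ M * (1 + t) ^ (-M) = ((1 + t) / 3) ^ (-M) := by
    rw [Real.div_rpow (by positivity) (by norm_num), Real.rpow_neg (by norm_num : (0 : ℝ) ≤ 3),
      div_inv_eq_mul, mul_comm]
  rw [mul_assoc, h3]
  rcases lt_or_ge t 2 with ht2 | ht2
  · refine prob_le_one.trans (ENNReal.one_le_ofReal.2 ?_)
    exact one_le_mul_of_one_le_of_one_le (le_max_right C 1)
      (Real.one_le_rpow_of_pos_of_le_one_of_nonpos (by positivity) (by linarith) (by linarith))
  -- compare with the tail at the largest integer `n < t`, which is at least `(1 + t) / 3`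
  set n := ⌈t⌉₊ - 1
  have hceil : 1 ≤ ⌈t⌉₊ := Nat.one_le_ceil_iff.2 (by linarith)
  have hn : (n : ℝ) = ⌈t⌉₊ - 1 := by rw [Nat.cast_sub hceil, Nat.cast_one]
  have hn_lt : (n : ℝ) < t := by linarith [Nat.ceil_lt_add_one ht]
  have hn_ge : (1 + t) / 3 ≤ n := by linarith [Nat.le_ceil t]
  calc μ {ω | t ≤ X ω} ≤ μ {ω | (n : ℝ) < X ω} :=
        measure_mono fun ω (hω : t ≤ X ω) => hn_lt.trans_le hω
    _ ≤ ENNReal.ofReal (C * (n : ℝ) ^ (-M)) := h n (by exact_mod_cast (by linarith : (1 : ℝ) ≤ n))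
    _ ≤ ENNReal.ofReal (max C 1 * ((1 + t) / 3) ^ (-M)) := by
        refine ENNReal.ofReal_le_ofReal (mul_le_mul (le_max_left C 1) ?_ (by positivity)
          (zero_le_one.trans (le_max_right C 1)))
        exact Real.rpow_le_rpow_of_nonpos (by positivity) hn_ge (by linarith)

theorem ENNReal.tsum_rpow_le_tsum_mul_rpow {ι : Type*} [Countable ι] (x u : ι → ℝ≥0∞)
    (hu₀ : ∀ i, u i ≠ 0) (hu : ∀ i, u i ≠ ⊤) {q : ℝ} (hq : 1 < q) :
    (∑' i, x i) ^ q ≤ (∑' i, u i ^ (1 - q) * x i ^ q) * (∑' i, u i) ^ (q - 1) := by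
  let _ : MeasurableSpace ι := ⊤
  have hq₀ : 0 < q := zero_lt_one.trans hq
  have hpq := Real.HolderConjugate.conjExponent hq
  set q' := q.conjExponent
  have hq' : q / q' = q - 1 := hpq.div_conj_eq_sub_one
  -- Hölder for the counting measure, after writing `x i = (x i * u i ^ (-1/q')) * u i ^ (1/q')`
  have key := ENNReal.lintegral_mul_le_Lp_mul_Lq Measure.count hpq
    (f := fun i => x i * u i ^ (-(1 / q'))) (g := fun i => u i ^ (1 / q'))
    (measurable_of_countable _).aemeasurable (measurable_of_countable _).aemeasurable
  simp only [lintegral_count, Pi.mul_apply] at key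
  have h₁ : ∀ i, x i * u i ^ (-(1 / q')) * u i ^ (1 / q') = x i := fun i => by
    rw [mul_assoc, ← ENNReal.rpow_add _ _ (hu₀ i) (hu i), neg_add_cancel, ENNReal.rpow_zero,
      mul_one]
  have h₂ : ∀ i, (x i * u i ^ (-(1 / q'))) ^ q = u i ^ (1 - q) * x i ^ q := fun i => by
    rw [ENNReal.mul_rpow_of_nonneg _ _ hq₀.le, ← ENNReal.rpow_mul, mul_comm]
    congr 2
    linear_combination -hq'
  have h₃ : ∀ i, (u i ^ (1 / q')) ^ q' = u i := fun i => by
    rw [← ENNReal.rpow_mul, one_div_mul_cancel hpq.symm.ne_zero, ENNReal.rpow_one]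
  simp only [h₁, h₂, h₃] at key
  calc (∑' i, x i) ^ q
      ≤ ((∑' i, u i ^ (1 - q) * x i ^ q) ^ (1 / q) * (∑' i, u i) ^ (1 / q')) ^ q :=
        ENNReal.rpow_le_rpow key hq₀.le
    _ = (∑' i, u i ^ (1 - q) * x i ^ q) * (∑' i, u i) ^ (q - 1) := by
        rw [ENNReal.mul_rpow_of_nonneg _ _ hq₀.le, ← ENNReal.rpow_mul, ← ENNReal.rpow_mul,
          one_div_mul_cancel hq₀.ne', ENNReal.rpow_one, ← hq', one_div_mul_eq_div]

theorem lintegral_tsum_indicator_rpow_le {Ω ι : Type*} [MeasurableSpace Ω] [Countable ι]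
    (μ : Measure Ω) (S : ι → Set Ω) (u : ι → ℝ≥0∞) (hu₀ : ∀ i, u i ≠ 0) (hu : ∀ i, u i ≠ ⊤)
    {q : ℝ} (hq : 1 < q) {C : ℝ≥0∞} (hS : ∀ i, μ (S i) ≤ C * u i ^ q) :
    ∫⁻ ω, (∑' i, (S i).indicator 1 ω) ^ q ∂μ ≤ C * (∑' i, u i) ^ q := by
  have hq₀ : 0 < q := zero_lt_one.trans hq
  choose T hST hT hμT using fun i => exists_measurable_superset μ (S i)
  have hterm : ∀ i, u i ^ (1 - q) * μ (T i) ≤ C * u i := fun i => by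
    calc u i ^ (1 - q) * μ (T i) ≤ u i ^ (1 - q) * (C * u i ^ q) := by rw [hμT]; gcongr; exact hS i
      _ = C * u i := by
        rw [mul_left_comm, ← ENNReal.rpow_add _ _ (hu₀ i) (hu i), sub_add_cancel,
          ENNReal.rpow_one]
  calc ∫⁻ ω, (∑' i, (S i).indicator 1 ω) ^ q ∂μ
      ≤ ∫⁻ ω, (∑' i, (T i).indicator 1 ω) ^ q ∂μ := by
        refine lintegral_mono fun ω =>
          ENNReal.rpow_le_rpow (ENNReal.tsum_le_tsum fun i => ?_) hq₀.le
        exact Set.indicator_le_indicator_of_subset (hST i) (fun _ => zero_le) ω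
    _ ≤ ∫⁻ ω, (∑' i, (T i).indicator (fun _ => u i ^ (1 - q)) ω) * (∑' i, u i) ^ (q - 1) ∂μ := by
        gcongr with ω
        refine (ENNReal.tsum_rpow_le_tsum_mul_rpow _ u hu₀ hu hq).trans_eq ?_
        congr 2 with i
        by_cases hω : ω ∈ T i <;> simp [hω, ENNReal.zero_rpow_of_pos hq₀]
    _ = (∑' i, u i ^ (1 - q) * μ (T i)) * (∑' i, u i) ^ (q - 1) := by
        rw [lintegral_mul_const _ (.tsum fun i => measurable_const.indicator (hT i)),
          lintegral_tsum fun i => (measurable_const.indicator (hT i)).aemeasurable]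
        simp only [lintegral_indicator_const (hT _)]
    _ ≤ (∑' i, C * u i) * (∑' i, u i) ^ (q - 1) :=
        mul_le_mul_left (ENNReal.tsum_le_tsum hterm) _
    _ = C * (∑' i, u i) ^ q := by
        rw [ENNReal.tsum_mul_left, mul_assoc]
        conv_rhs => rw [← add_sub_cancel 1 q, ENNReal.rpow_add_of_nonneg _ _ zero_le_one
          (by linarith), ENNReal.rpow_one]

theorem ENNReal.rpow_le_one_add_rpow (x : ℝ≥0∞) {p q : ℝ} (hp : 0 ≤ p) (hpq : p ≤ q) :
    x ^ p ≤ 1 + x ^ q := by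
  rcases le_total x 1 with hx | hx
  · exact (ENNReal.rpow_le_one hx hp).trans le_self_add
  · exact (ENNReal.rpow_le_rpow_of_exponent_le hx hpq).trans le_add_self

/-- If each random path `π(e)` connects the endpoints of the edge `e` (so that an edge `b`
on the path `π(e)` is at distance at most `|π(e)|` from `e`) and has uniformly
faster-than-polynomial tails, then the number of edges whose path passes through a fixed
edge `b` has all polynomial moments finite. -/
theorem stmt15 {Ω : Type*} [MeasurableSpace Ω] (μ : Measure Ω) [IsProbabilityMeasure μ]
    (d : ℕ)
    (π : Ω → ((Fin d → ℤ) × Fin d) → Finset ((Fin d → ℤ) × Fin d))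
    (htail : ∀ M : ℝ, 1 ≤ M → ∃ C : ℝ, ∀ e, ∀ n : ℕ, 1 ≤ n →
      μ {ω | (n : ℝ) < ((π ω e).card : ℝ)} ≤ ENNReal.ofReal (C * (n : ℝ) ^ (-M)))
    (hconn : ∀ ω e b, b ∈ π ω e → ‖e.1 - b.1‖ ≤ ((π ω e).card : ℝ))
    (b : (Fin d → ℤ) × Fin d) (p : ℝ) (hp : 1 ≤ p) :
    ∫⁻ ω, (∑' e : (Fin d → ℤ) × Fin d,
        (if b ∈ π ω e then (1 : ℝ≥0∞) else 0)) ^ p ∂μ < ⊤ := by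
  set s : ℝ := d + 1
  set q : ℝ := p + 1
  have hq : 1 < q := by linarith
  obtain ⟨C, hC⟩ := htail (s * q) (one_le_mul_of_one_le_of_one_le (by simp [s]) hq.le)
  set u : (Fin d → ℤ) × Fin d → ℝ≥0∞ := fun e => ENNReal.ofReal ((1 + ‖e.1 - b.1‖) ^ (-s))
  have hpath : ∀ e, μ {ω | b ∈ π ω e} ≤ ENNReal.ofReal (max C 1 * 3 ^ (s * q)) * u e ^ q := by
    intro e
    calc μ {ω | b ∈ π ω e} ≤ μ {ω | ‖e.1 - b.1‖ ≤ (π ω e).card} :=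
          measure_mono fun ω hω => hconn ω e b hω
      _ ≤ ENNReal.ofReal (max C 1 * 3 ^ (s * q) * (1 + ‖e.1 - b.1‖) ^ (-(s * q))) :=
          measure_ge_le_of_nat_tail (by positivity) (hC e) (norm_nonneg _)
      _ = ENNReal.ofReal (max C 1 * 3 ^ (s * q)) * u e ^ q := by
          rw [ENNReal.ofReal_mul (by positivity), ENNReal.ofReal_rpow_of_nonneg (by positivity)
            (by positivity), ← Real.rpow_mul (by positivity), neg_mul]
  have hmoment : ∫⁻ ω, (∑' e, {ω | b ∈ π ω e}.indicator 1 ω) ^ q ∂μ < ⊤ :=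
    (lintegral_tsum_indicator_rpow_le μ _ u (fun e => (ENNReal.ofReal_pos.2 (by positivity)).ne')
      (fun e => ENNReal.ofReal_ne_top) hq hpath).trans_lt
      (ENNReal.mul_lt_top ENNReal.ofReal_lt_top (ENNReal.rpow_lt_top_of_nonneg (by linarith)
        (tsum_ofReal_one_add_norm_sub_rpow_neg_lt_top (by simp [s]) b.1 (Fin d)).ne))
  calc ∫⁻ ω, (∑' e, (if b ∈ π ω e then (1 : ℝ≥0∞) else 0)) ^ p ∂μ
      ≤ ∫⁻ ω, 1 + (∑' e, {ω | b ∈ π ω e}.indicator 1 ω) ^ q ∂μ := by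
        refine lintegral_mono fun ω => ?_
        simpa [Set.indicator_apply] using ENNReal.rpow_le_one_add_rpow _ (by linarith) (by linarith)
    _ < ⊤ := by
        rw [lintegral_add_left measurable_const, lintegral_const, measure_univ, mul_one]
        exact ENNReal.add_lt_top.2 ⟨ENNReal.one_lt_top, hmoment⟩
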